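/- In the polynomial ring R = ℚ[x11, x22, x21, x12, x23, x13, x14, x24], the set of minimal primes over the ideal I generated by x11*x22 − x21*x12, x12*x23 − x22*x13, and x13*x24 − x23*x14 is exactly {Q1, Q2, Q3}, where Q1 is the ideal of the six 2×2 minors of the generic 2×4 matrix with rows (x11, x12, x13, x14) and (x21, x22, x23, x24), Q2 is the ideal generated by x13, x23, x11*x22 − x21*x12, and Q3 is the ideal generated by x12, x22, x23*x14 − x13*x24. In particular, the variety V(I) has exactly three irreducible components. -/

import Mathlib

/-!
Write `D_jk` for the `2 × 2` minor of the matrix `x = (x_ij)` on columns `j, k`, so that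
`I = (D_12, D_23, D_34)`. Expanding a `3 × 3` determinant with a repeated row gives
`x_rb D_ac = x_ra D_bc + x_rc D_ab`. Hence a prime `P ⊇ I` that contains both entries of column 2
contains `Q3`, one that contains column 3 contains `Q2`, and any other contains `D_13`, `D_24`,
then `D_14`, so contains `Q1`.

The three ideals are prime. The ideal of `2 × 2` minors of the columns `C` of a generic matrix is
the kernel of the monomial map `x_ij ↦ s_i t_j` (`j ∈ C`), `x_ij ↦ y_ij` (`j ∉ C`): two monomials
with the same image are connected by exchanges `x_i'j x_ik ↦ x_ij x_i'k`, each of which changes the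
monomial by a multiple of a minor. `Q1` is such an ideal, and `Q2`, `Q3` are preimages of such
ideals under setting a column to zero. Evaluating at suitable `2 × 4` matrices shows that no two of
`Q1`, `Q2`, `Q3` are comparable.
-/

open MvPolynomial

noncomputable section

abbrev R : Type := MvPolynomial (Fin 8) ℚ

def x11 : R := X 0
def x22 : R := X 1
def x21 : R := X 2
def x12 : R := X 3
def x23 : R := X 4
def x13 : R := X 5
def x14 : R := X 6
def x24 : R := X 7

def I : Ideal R :=
  Ideal.span {x11 * x22 - x21 * x12, x12 * x23 - x22 * x13, x13 * x24 - x23 * x14}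

def Q1 : Ideal R :=
  Ideal.span {x23 * x14 - x13 * x24, x21 * x14 - x11 * x24, x22 * x14 - x12 * x24,
    x12 * x23 - x22 * x13, x11 * x23 - x21 * x13, x11 * x22 - x21 * x12}

def Q2 : Ideal R := Ideal.span {x13, x23, x11 * x22 - x21 * x12}

def Q3 : Ideal R := Ideal.span {x12, x22, x23 * x14 - x13 * x24}

theorem Finsupp.exists_eq_single_add_single_add {α : Type*} {ν : α →₀ ℕ} {a b : α}
    (hab : a ≠ b) (ha : ν a ≠ 0) (hb : ν b ≠ 0) :
    ∃ ρ, ν = Finsupp.single a 1 + Finsupp.single b 1 + ρ := by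
  classical
  apply exists_add_of_le
  intro x
  simp only [Finsupp.add_apply, Finsupp.single_apply]
  split_ifs <;> subst_vars <;> first | omega | exact absurd rfl hab

namespace MvPolynomial

variable {K σ τ : Type*} [CommRing K]

theorem ker_mapDomainRingHom_le (η : (σ →₀ ℕ) →+ (τ →₀ ℕ)) {J : Ideal (MvPolynomial σ K)}
    (hJ : ∀ μ ν, η μ = η ν → monomial μ (1 : K) - monomial ν 1 ∈ J) :
    RingHom.ker (AddMonoidAlgebra.mapDomainRingHom K η :
      MvPolynomial σ K →+* MvPolynomial τ K) ≤ J := by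
  -- With `s` choosing a monomial in each fibre of `η`, `f ≡ mapDomain (s ∘ η) f` modulo `J`,
  -- and the latter is `mapDomain s` applied to the image `0` of `f`.
  intro f hf
  let s := Function.invFun η
  have hsec : ∀ μ, η (s (η μ)) = η μ := fun μ => Function.invFun_eq ⟨μ, rfl⟩
  have hfiber : ∀ p : MvPolynomial σ K, p - AddMonoidAlgebra.mapDomain (s ∘ η) p ∈ J := by
    intro p
    induction p using MvPolynomial.induction_on' with
    | monomial μ c =>
      rw [← single_eq_monomial, AddMonoidAlgebra.mapDomain_single, single_eq_monomial,
        single_eq_monomial, ← mul_one c, ← C_mul_monomial, ← C_mul_monomial, ← mul_sub]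
      exact J.mul_mem_left _ (hJ _ _ (hsec μ).symm)
    | add p q hp hq =>
      rw [AddMonoidAlgebra.mapDomain_add, add_sub_add_comm]
      exact J.add_mem hp hq
  have hcomp : AddMonoidAlgebra.mapDomain (s ∘ η) f =
      AddMonoidAlgebra.mapDomain s (AddMonoidAlgebra.mapDomainRingHom K η f) :=
    congrArg AddMonoidAlgebra.ofCoeff Finsupp.mapDomain_comp
  simpa [hcomp, RingHom.mem_ker.mp hf] using hfiber f

theorem sub_aeval_mem_span (g : σ → MvPolynomial σ K) (f : MvPolynomial σ K) :
    f - aeval g f ∈ Ideal.span (Set.range fun v => X v - g v) := by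
  induction f using MvPolynomial.induction_on with
  | C a => simp
  | add p q hp hq => simpa [add_sub_add_comm] using add_mem hp hq
  | mul_X p v hp =>
    have : p * X v - aeval g (p * X v) = (p - aeval g p) * X v + aeval g p * (X v - g v) := by
      simp only [map_mul, aeval_X]; ring
    rw [this]
    exact add_mem (Ideal.mul_mem_right _ _ hp) (Ideal.mul_mem_left _ _ (Ideal.subset_span ⟨v, rfl⟩))

lemma monomial_single_add_single_add (a b : σ) (ρ : σ →₀ ℕ) :
    monomial (Finsupp.single a 1 + Finsupp.single b 1 + ρ) (1 : K) = X a * X b * monomial ρ 1 := by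
  simp [X, monomial_mul]

section Minors

variable {ι κ : Type*} (e : ι × κ ≃ σ) (C : Set κ)

/-- `x_ij x_i'k - x_i'j x_ik` for `x_ij = X (e (i, j))`; this order of the factors makes the
generators of `I`, `Q1`, `Q2`, `Q3` minors definitionally. -/
def minor (i i' : ι) (j k : κ) : MvPolynomial σ K :=
  X (e (i, j)) * X (e (i', k)) - X (e (i', j)) * X (e (i, k))

def minorIdeal : Ideal (MvPolynomial σ K) :=
  Ideal.span {f | ∃ i i' j k, j ∈ C ∧ k ∈ C ∧ minor e i i' j k = f}

variable {e}

lemma minor_self_rows (i : ι) (j k : κ) : minor (K := K) e i i j k = 0 := by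
  rw [minor]; ring

lemma minor_self_cols (i i' : ι) (j : κ) : minor (K := K) e i i' j j = 0 := by
  rw [minor]; ring

lemma minor_swap_rows (i i' : ι) (j k : κ) : minor (K := K) e i' i j k = -minor e i i' j k := by
  rw [minor, minor]; ring

lemma minor_swap_cols (i i' : ι) (j k : κ) : minor (K := K) e i i' k j = -minor e i i' j k := by
  rw [minor, minor]; ring

lemma minorIdeal_le_of_lt [LinearOrder ι] [LinearOrder κ] {J : Ideal (MvPolynomial σ K)}
    (h : ∀ i i' j k, i < i' → j < k → j ∈ C → k ∈ C → minor e i i' j k ∈ J) :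
    minorIdeal e C ≤ J := by
  have hrows : ∀ i i' j k, j < k → j ∈ C → k ∈ C → minor e i i' j k ∈ J := by
    intro i i' j k hjk hj hk
    rcases lt_trichotomy i i' with hi | rfl | hi
    · exact h i i' j k hi hjk hj hk
    · rw [minor_self_rows]; exact zero_mem J
    · rw [minor_swap_rows]; exact neg_mem (h i' i j k hi hjk hj hk)
  rw [minorIdeal, Ideal.span_le]
  rintro _ ⟨i, i', j, k, hj, hk, rfl⟩
  rcases lt_trichotomy j k with hjk | rfl | hjk
  · exact hrows i i' j k hjk hj hk
  · rw [minor_self_cols]; exact zero_mem J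
  · rw [minor_swap_cols]; exact neg_mem (hrows i i' k j hjk hk hj)

/-- Laplace expansion of a `3 × 3` determinant with a repeated row. -/
lemma X_mul_minor {i i' r : ι} (hr : r = i ∨ r = i') (a b c : κ) :
    X (e (r, b)) * minor (K := K) e i i' a c =
      X (e (r, a)) * minor e i i' b c + X (e (r, c)) * minor e i i' a b := by
  rcases hr with rfl | rfl <;> simp only [minor] <;> ring

lemma minor_mem_of_X_not_mem {P : Ideal (MvPolynomial σ K)} [P.IsPrime] {i i' r : ι}
    (hr : r = i ∨ r = i') {a b c : κ} (hab : minor e i i' a b ∈ P) (hbc : minor e i i' b c ∈ P)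
    (hX : X (e (r, b)) ∉ P) : minor e i i' a c ∈ P := by
  refine (Ideal.IsPrime.mem_or_mem ‹_› ?_).resolve_left hX
  rw [X_mul_minor hr]
  exact add_mem (P.mul_mem_left _ hbc) (P.mul_mem_left _ hab)

end Minors

section Segre

variable {ι κ : Type*} (e : ι × κ ≃ σ) (C : Set κ)

open Classical in
/-- The exponent of the image of `x_ij` under the map `x_ij ↦ s_i t_j` for `j ∈ C` and
`x_ij ↦ y_ij` for `j ∉ C`; the variables `s_i, t_j, y_ij` are indexed by `(ι ⊕ κ) ⊕ (ι × κ)`. -/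
def segreWeight (p : ι × κ) : (ι ⊕ κ) ⊕ (ι × κ) →₀ ℕ :=
  if p.2 ∈ C then Finsupp.single (.inl (.inl p.1)) 1 + Finsupp.single (.inl (.inr p.2)) 1
  else Finsupp.single (.inr p) 1

def segreExponent : (σ →₀ ℕ) →+ ((ι ⊕ κ) ⊕ (ι × κ) →₀ ℕ) :=
  (Finsupp.linearCombination ℕ (segreWeight C ∘ e.symm)).toAddMonoidHom

lemma segreExponent_single (p : ι × κ) :
    segreExponent e C (Finsupp.single (e p) 1) = segreWeight C p := by
  simp [segreExponent]

lemma segreExponent_apply_ne_zero (μ : σ →₀ ℕ) (t : (ι ⊕ κ) ⊕ (ι × κ)) :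
    segreExponent e C μ t ≠ 0 ↔ ∃ p, μ (e p) ≠ 0 ∧ segreWeight C p t ≠ 0 := by
  simp only [segreExponent, LinearMap.toAddMonoidHom_coe, Finsupp.linearCombination_apply,
    Finsupp.sum, Finsupp.finsetSum_apply, Finsupp.smul_apply, smul_eq_mul, Function.comp_apply,
    ne_eq, Finset.sum_eq_zero_iff, Finsupp.mem_support_iff, mul_eq_zero, not_forall, not_or]
  rw [← e.exists_congr_right]
  simp

variable {e C}

lemma exists_segreWeight_ne_zero_of_eq {μ ν : σ →₀ ℕ}
    (h : segreExponent e C μ = segreExponent e C ν)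
    {p : ι × κ} (hp : μ (e p) ≠ 0) {t : (ι ⊕ κ) ⊕ (ι × κ)} (ht : segreWeight C p t ≠ 0) :
    ∃ q, ν (e q) ≠ 0 ∧ segreWeight C q t ≠ 0 := by
  rw [← segreExponent_apply_ne_zero, ← h, segreExponent_apply_ne_zero]
  exact ⟨p, hp, ht⟩

lemma segreWeight_ne_zero (p : ι × κ) : segreWeight C p ≠ 0 := by
  unfold segreWeight; split_ifs <;> simp

lemma segreWeight_inr_ne_zero {p q : ι × κ} :
    segreWeight C p (.inr q) ≠ 0 ↔ p.2 ∉ C ∧ q = p := by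
  unfold segreWeight; split_ifs <;> simp [Finsupp.single_apply_eq_zero, *]

lemma segreWeight_inl_inl_ne_zero {p : ι × κ} {i : ι} :
    segreWeight C p (.inl (.inl i)) ≠ 0 ↔ p.2 ∈ C ∧ i = p.1 := by
  unfold segreWeight; split_ifs <;> simp [Finsupp.single_apply_eq_zero, *]

lemma segreWeight_inl_inr_ne_zero {p : ι × κ} {j : κ} :
    segreWeight C p (.inl (.inr j)) ≠ 0 ↔ p.2 ∈ C ∧ j = p.2 := by
  unfold segreWeight; split_ifs <;> simp [Finsupp.single_apply_eq_zero, *]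

theorem exists_exchange_of_segreExponent_eq {μ ν : σ →₀ ℕ}
    (h : segreExponent e C μ = segreExponent e C ν)
    {p : ι × κ} (hp : μ (e p) ≠ 0) :
    ∃ ν', segreExponent e C ν' = segreExponent e C ν ∧ ν' (e p) ≠ 0 ∧
      monomial ν (1 : K) - monomial ν' 1 ∈ minorIdeal e C := by
  obtain ⟨i, j⟩ := p
  by_cases hν : ν (e (i, j)) ≠ 0
  · exact ⟨ν, rfl, hν, by simp⟩
  push Not at hν
  -- `ν` has some `x_i'j` (column sums) and some `x_ik` (row sums); exchange them.
  have hj : j ∈ C := by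
    by_contra hj
    obtain ⟨q, hq, hwq⟩ := exists_segreWeight_ne_zero_of_eq h hp
      (segreWeight_inr_ne_zero.2 ⟨hj, rfl⟩)
    exact hq ((segreWeight_inr_ne_zero.1 hwq).2 ▸ hν)
  obtain ⟨⟨i', j'⟩, hb, hwb⟩ := exists_segreWeight_ne_zero_of_eq h hp
    (segreWeight_inl_inr_ne_zero.2 ⟨hj, rfl⟩)
  obtain hj' : j = j' := (segreWeight_inl_inr_ne_zero.1 hwb).2
  subst hj'
  obtain ⟨⟨i'', k⟩, hc, hwc⟩ := exists_segreWeight_ne_zero_of_eq h hp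
    (segreWeight_inl_inl_ne_zero.2 ⟨hj, rfl⟩)
  obtain ⟨hk, hi : i = i''⟩ := segreWeight_inl_inl_ne_zero.1 hwc
  subst hi
  have hne : e (i', j) ≠ e (i, k) := by
    simp only [ne_eq, e.apply_eq_iff_eq, Prod.mk.injEq, not_and]
    rintro rfl rfl
    exact hb hν
  obtain ⟨ρ, rfl⟩ := Finsupp.exists_eq_single_add_single_add hne hb hc
  refine ⟨Finsupp.single (e (i, j)) 1 + Finsupp.single (e (i', k)) 1 + ρ, ?_, by simp, ?_⟩
  · simp only [map_add, segreExponent_single, segreWeight, if_pos hj, if_pos hk]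
    abel
  · rw [monomial_single_add_single_add, monomial_single_add_single_add, ← sub_mul]
    exact Ideal.mul_mem_right _ _ (Ideal.subset_span ⟨i', i, j, k, hj, hk, rfl⟩)

theorem monomial_sub_monomial_mem_minorIdeal (μ ν : σ →₀ ℕ)
    (h : segreExponent e C μ = segreExponent e C ν) :
    monomial μ (1 : K) - monomial ν 1 ∈ minorIdeal e C := by
  induction μ using WellFoundedLT.induction generalizing ν with
  | ind μ ih =>
  by_cases hμ : μ = 0
  · subst hμ
    obtain rfl : ν = 0 := by
      by_contra hν
      obtain ⟨v, hv⟩ := Finsupp.ne_iff.mp hν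
      obtain ⟨p, rfl⟩ := e.surjective v
      obtain ⟨t, ht⟩ := Finsupp.ne_iff.mp (segreWeight_ne_zero (C := C) p)
      obtain ⟨q, hq, -⟩ := exists_segreWeight_ne_zero_of_eq h.symm hv ht
      exact hq rfl
    simp
  obtain ⟨v, hv⟩ := Finsupp.ne_iff.mp hμ
  obtain ⟨p, rfl⟩ := e.surjective v
  obtain ⟨ν', hν', hν'p, hmem⟩ := exists_exchange_of_segreExponent_eq (K := K) h hv
  obtain ⟨μ₀, rfl⟩ : ∃ μ₀, μ = Finsupp.single (e p) 1 + μ₀ :=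
    exists_add_of_le (Finsupp.single_le_iff.2 (Nat.one_le_iff_ne_zero.2 hv))
  obtain ⟨ν₀, rfl⟩ : ∃ ν₀, ν' = Finsupp.single (e p) 1 + ν₀ :=
    exists_add_of_le (Finsupp.single_le_iff.2 (Nat.one_le_iff_ne_zero.2 hν'p))
  have h₀ : segreExponent e C μ₀ = segreExponent e C ν₀ := by
    rw [← hν', map_add, map_add] at h
    exact add_left_cancel h
  have hlt : μ₀ < Finsupp.single (e p) 1 + μ₀ :=
    lt_add_of_pos_left _ (by simp [pos_iff_ne_zero])
  have hX : ∀ μ, monomial (Finsupp.single (e p) 1 + μ) (1 : K) = X (e p) * monomial μ 1 :=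
    fun μ => by simp [X, monomial_mul]
  have key : monomial (Finsupp.single (e p) 1 + μ₀) (1 : K) - monomial ν 1 =
      X (e p) * (monomial μ₀ 1 - monomial ν₀ 1) +
        (monomial (Finsupp.single (e p) 1 + ν₀) 1 - monomial ν 1) := by
    rw [hX, hX]
    ring
  rw [key, ← neg_sub (monomial ν 1)]
  exact add_mem (Ideal.mul_mem_left _ _ (ih μ₀ hlt ν₀ h₀)) (neg_mem hmem)

variable (e C)

def segreMap : MvPolynomial σ K →+* MvPolynomial ((ι ⊕ κ) ⊕ (ι × κ)) K :=
  AddMonoidAlgebra.mapDomainRingHom K (segreExponent e C)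

lemma segreMap_X (p : ι × κ) : segreMap (K := K) e C (X (e p)) = monomial (segreWeight C p) 1 := by
  rw [segreMap, X, ← single_eq_monomial, AddMonoidAlgebra.mapDomainRingHom_apply,
    AddMonoidAlgebra.mapDomain_single, segreExponent_single, single_eq_monomial]

lemma segreMap_minor {j k : κ} (hj : j ∈ C) (hk : k ∈ C) (i i' : ι) :
    segreMap e C (minor (K := K) e i i' j k) = 0 := by
  simp only [minor, map_sub, map_mul, segreMap_X, monomial_mul, segreWeight, if_pos hj, if_pos hk]
  rw [sub_eq_zero]
  congr 1
  abel_nf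

theorem minorIdeal_eq_ker : minorIdeal e C = RingHom.ker (segreMap (K := K) e C) := by
  refine le_antisymm ?_ (ker_mapDomainRingHom_le _ (monomial_sub_monomial_mem_minorIdeal))
  rw [minorIdeal, Ideal.span_le]
  rintro _ ⟨i, i', j, k, hj, hk, rfl⟩
  exact segreMap_minor e C hj hk i i'

theorem isPrime_minorIdeal [IsDomain K] : (minorIdeal (K := K) e C).IsPrime := by
  rw [minorIdeal_eq_ker]
  exact RingHom.ker_isPrime _

end Segre

end MvPolynomial

theorem Ideal.eq_comap_of_sub_mem {A F : Type*} [CommRing A] [FunLike F A A] [RingHomClass F A A]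
    {Q J : Ideal A} (φ : F) (hJ : J ≤ Q) (hQ : Q ≤ J.comap φ) (hsub : ∀ f, f - φ f ∈ Q) :
    Q = J.comap φ :=
  le_antisymm hQ fun f hf => by simpa using add_mem (hsub f) (hJ hf)

theorem Ideal.minimalPrimes_eq_of_forall_exists_le {A : Type*} [CommSemiring A] {I : Ideal A}
    {S : Set (Ideal A)} (hS : ∀ Q ∈ S, Q.IsPrime ∧ I ≤ Q) (hanti : IsAntichain (· ≤ ·) S)
    (hcover : ∀ P : Ideal A, P.IsPrime → I ≤ P → ∃ Q ∈ S, Q ≤ P) :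
    I.minimalPrimes = S := by
  ext P
  simp only [Ideal.minimalPrimes, Ideal.IsMinimalPrime, Set.mem_ofPred_eq]
  constructor
  · intro hP
    obtain ⟨Q, hQ, hQP⟩ := hcover P hP.prop.1 hP.prop.2
    rwa [← le_antisymm hQP (hP.le_of_le (hS Q hQ) hQP)]
  · intro hP
    refine ⟨hS P hP, fun P' hP' hle => ?_⟩
    obtain ⟨Q, hQ, hQP'⟩ := hcover P' hP'.1 hP'.2
    rwa [hanti.eq hQ hP (hQP'.trans hle)] at hQP'

/-- `x_ij = X (matrixEntry (i - 1, j - 1))`. -/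
def matrixEntry : Fin 2 × Fin 4 ≃ Fin 8 where
  toFun p := ![![0, 3, 5, 6], ![2, 1, 4, 7]] p.1 p.2
  invFun := ![(0, 0), (1, 1), (1, 0), (0, 1), (1, 2), (0, 2), (0, 3), (1, 3)]
  left_inv := by decide
  right_inv := by decide

local notation "D" => minor (K := ℚ) matrixEntry

lemma I_eq_span_minors : I = Ideal.span {D 0 1 0 1, D 0 1 1 2, D 0 1 2 3} := rfl

lemma Q1_eq_span_minors :
    Q1 = Ideal.span {D 1 0 2 3, D 1 0 0 3, D 1 0 1 3, D 0 1 1 2, D 0 1 0 2, D 0 1 0 1} := rfl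

lemma Q2_eq_span :
    Q2 = Ideal.span {X (matrixEntry (0, 2)), X (matrixEntry (1, 2)), D 0 1 0 1} := rfl

lemma Q3_eq_span :
    Q3 = Ideal.span {X (matrixEntry (0, 1)), X (matrixEntry (1, 1)), D 1 0 2 3} := rfl

lemma fin_two_eq_of_lt {i i' : Fin 2} (h : i < i') : i = 0 ∧ i' = 1 := by
  revert i i'; decide

lemma minorIdeal_univ_le {J : Ideal R} (h01 : D 0 1 0 1 ∈ J) (h02 : D 0 1 0 2 ∈ J)
    (h03 : D 0 1 0 3 ∈ J) (h12 : D 0 1 1 2 ∈ J) (h13 : D 0 1 1 3 ∈ J) (h23 : D 0 1 2 3 ∈ J) :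
    minorIdeal matrixEntry Set.univ ≤ J := by
  refine minorIdeal_le_of_lt _ fun i i' j k hi hjk _ _ => ?_
  obtain ⟨rfl, rfl⟩ := fin_two_eq_of_lt hi
  fin_cases j <;> fin_cases k <;> first | exact absurd hjk (by decide) | assumption

lemma minorIdeal_pair_le {J : Ideal R} {j k : Fin 4} (hjk : j < k) (h : D 0 1 j k ∈ J) :
    minorIdeal matrixEntry {j, k} ≤ J := by
  refine minorIdeal_le_of_lt _ fun i i' a b hi hab ha hb => ?_
  obtain ⟨rfl, rfl⟩ := fin_two_eq_of_lt hi
  simp only [Set.mem_insert_iff, Set.mem_singleton_iff] at ha hb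
  rcases ha with rfl | rfl <;> rcases hb with rfl | rfl <;> first | exact h | order

lemma Q1_eq_minorIdeal : Q1 = minorIdeal matrixEntry Set.univ := by
  have hswap : ∀ j k, D 1 0 j k ∈ Q1 → D 0 1 j k ∈ Q1 := fun j k h => by
    rwa [← neg_mem_iff, ← minor_swap_rows]
  have hmem : ∀ f ∈ ({D 1 0 2 3, D 1 0 0 3, D 1 0 1 3, D 0 1 1 2, D 0 1 0 2, D 0 1 0 1} : Set R),
      f ∈ Q1 := fun f hf => Q1_eq_span_minors ▸ Ideal.subset_span hf
  refine le_antisymm ?_ (minorIdeal_univ_le ?_ ?_ (hswap _ _ ?_) ?_ (hswap _ _ ?_) (hswap _ _ ?_))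
  · rw [Q1_eq_span_minors, Ideal.span_le]
    rintro _ (rfl | rfl | rfl | rfl | rfl | rfl) <;>
      exact Ideal.subset_span ⟨_, _, _, _, trivial, trivial, rfl⟩
  all_goals exact hmem _ (by simp)

lemma Q1_isPrime : Q1.IsPrime := Q1_eq_minorIdeal ▸ isPrime_minorIdeal matrixEntry Set.univ

def eraseColumn (c : Fin 4) : R →ₐ[ℚ] R :=
  aeval fun v => if (matrixEntry.symm v).2 = c then 0 else X v

lemma eraseColumn_X (i : Fin 2) (j c : Fin 4) :
    eraseColumn c (X (matrixEntry (i, j))) = if j = c then 0 else X (matrixEntry (i, j)) := by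
  simp [eraseColumn]

lemma eraseColumn_minor {c j k : Fin 4} (hj : j ≠ c) (hk : k ≠ c) (i i' : Fin 2) :
    eraseColumn c (D i i' j k) = D i i' j k := by
  simp [minor, eraseColumn_X, hj, hk]

lemma sub_eraseColumn_mem {Q : Ideal R} {c : Fin 4} (hQ : ∀ i, X (matrixEntry (i, c)) ∈ Q)
    (f : R) : f - eraseColumn c f ∈ Q := by
  refine Ideal.span_le.2 ?_ (sub_aeval_mem_span _ f)
  rintro _ ⟨v, rfl⟩
  obtain ⟨⟨i, j⟩, rfl⟩ := matrixEntry.surjective v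
  by_cases hj : j = c
  · subst hj; simpa using hQ i
  · simp [hj]

lemma eq_comap_eraseColumn {Q : Ideal R} {c j k : Fin 4} (hjk : j < k) (hj : j ≠ c) (hk : k ≠ c)
    {i i' : Fin 2} (hi : i ≠ i')
    (hQ : Q = Ideal.span {X (matrixEntry (0, c)), X (matrixEntry (1, c)), D i i' j k}) :
    Q = (minorIdeal matrixEntry {j, k}).comap (eraseColumn c) := by
  have hD : D i i' j k ∈ Q := hQ ▸ Ideal.subset_span (by simp)
  have hX : ∀ r, X (matrixEntry (r, c)) ∈ Q := fun r =>
    hQ ▸ Ideal.subset_span (by fin_cases r <;> simp)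
  refine Ideal.eq_comap_of_sub_mem _ (minorIdeal_pair_le hjk ?_) ?_ (sub_eraseColumn_mem hX)
  · fin_cases i <;> fin_cases i'
    · exact absurd rfl hi
    · exact hD
    · rwa [← neg_mem_iff, ← minor_swap_rows]
    · exact absurd rfl hi
  · rw [hQ, Ideal.span_le]
    rintro _ (rfl | rfl | rfl) <;> rw [SetLike.mem_coe, Ideal.mem_comap]
    · simp [eraseColumn_X]
    · simp [eraseColumn_X]
    · rw [eraseColumn_minor hj hk]
      exact Ideal.subset_span ⟨i, i', j, k, by simp, by simp, rfl⟩

lemma Q2_eq_comap : Q2 = (minorIdeal matrixEntry {0, 1}).comap (eraseColumn 2) :=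
  eq_comap_eraseColumn (by decide) (by decide) (by decide) (by decide) Q2_eq_span

lemma Q3_eq_comap : Q3 = (minorIdeal matrixEntry {2, 3}).comap (eraseColumn 1) :=
  eq_comap_eraseColumn (by decide) (by decide) (by decide) (by decide) Q3_eq_span

lemma Q2_isPrime : Q2.IsPrime := by
  have := isPrime_minorIdeal (K := ℚ) matrixEntry {0, 1}
  rw [Q2_eq_comap]
  exact Ideal.IsPrime.comap _

lemma Q3_isPrime : Q3.IsPrime := by
  have := isPrime_minorIdeal (K := ℚ) matrixEntry {2, 3}
  rw [Q3_eq_comap]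
  exact Ideal.IsPrime.comap _

lemma I_le_Q1 : I ≤ Q1 := by
  rw [I_eq_span_minors, Q1_eq_minorIdeal, Ideal.span_le]
  rintro _ (rfl | rfl | rfl) <;> exact Ideal.subset_span ⟨_, _, _, _, trivial, trivial, rfl⟩

lemma I_le_Q2 : I ≤ Q2 := by
  rw [I_eq_span_minors, Q2_eq_comap, Ideal.span_le]
  rintro _ (rfl | rfl | rfl) <;> rw [SetLike.mem_coe, Ideal.mem_comap]
  · rw [eraseColumn_minor (by decide) (by decide)]
    exact Ideal.subset_span ⟨0, 1, 0, 1, by simp, by simp, rfl⟩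
  all_goals simp [minor, eraseColumn_X]

lemma I_le_Q3 : I ≤ Q3 := by
  rw [I_eq_span_minors, Q3_eq_comap, Ideal.span_le]
  rintro _ (rfl | rfl | rfl) <;> rw [SetLike.mem_coe, Ideal.mem_comap]
  · simp [minor, eraseColumn_X]
  · simp [minor, eraseColumn_X]
  · rw [eraseColumn_minor (by decide) (by decide)]
    exact Ideal.subset_span ⟨0, 1, 2, 3, by simp, by simp, rfl⟩

lemma exists_le_of_I_le (P : Ideal R) [P.IsPrime] (hI : I ≤ P) : Q1 ≤ P ∨ Q2 ≤ P ∨ Q3 ≤ P := by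
  rw [I_eq_span_minors, Ideal.span_le] at hI
  have h01 : D 0 1 0 1 ∈ P := hI (by simp)
  have h12 : D 0 1 1 2 ∈ P := hI (by simp)
  have h23 : D 0 1 2 3 ∈ P := hI (by simp)
  by_cases h2 : ∀ r, X (matrixEntry (r, 2)) ∈ P
  · refine Or.inr (Or.inl ?_)
    rw [Q2_eq_span, Ideal.span_le]
    rintro _ (rfl | rfl | rfl)
    exacts [h2 0, h2 1, h01]
  by_cases h1 : ∀ r, X (matrixEntry (r, 1)) ∈ P
  · refine Or.inr (Or.inr ?_)
    rw [Q3_eq_span, Ideal.span_le]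
    rintro _ (rfl | rfl | rfl)
    exacts [h1 0, h1 1, by rwa [SetLike.mem_coe, minor_swap_rows, neg_mem_iff]]
  push Not at h1 h2
  obtain ⟨r, hr⟩ := h1
  obtain ⟨s, hs⟩ := h2
  have hrow : ∀ r : Fin 2, r = 0 ∨ r = 1 := by decide
  have h02 := minor_mem_of_X_not_mem (hrow r) h01 h12 hr
  have h13 := minor_mem_of_X_not_mem (hrow s) h12 h23 hs
  have h03 := minor_mem_of_X_not_mem (hrow s) h02 h23 hs
  exact Or.inl (Q1_eq_minorIdeal ▸ minorIdeal_univ_le h01 h02 h03 h12 h13 h23)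

def evalAt (M : Matrix (Fin 2) (Fin 4) ℚ) : R →+* ℚ :=
  eval fun v => M (matrixEntry.symm v).1 (matrixEntry.symm v).2

lemma evalAt_X (M : Matrix (Fin 2) (Fin 4) ℚ) (i : Fin 2) (j : Fin 4) :
    evalAt M (X (matrixEntry (i, j))) = M i j := by
  simp [evalAt]

lemma not_le_of_evalAt {Q Q' : Ideal R} {M : Matrix (Fin 2) (Fin 4) ℚ}
    (hQ' : Q' ≤ RingHom.ker (evalAt M)) {f : R} (hf : f ∈ Q) (hM : evalAt M f ≠ 0) : ¬Q ≤ Q' :=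
  fun h => hM (hQ' (h hf))

lemma Q1_le_ker_evalAt : Q1 ≤ RingHom.ker (evalAt (Matrix.of fun _ _ => 1)) := by
  rw [Q1_eq_minorIdeal, minorIdeal, Ideal.span_le]
  rintro _ ⟨i, i', j, k, -, -, rfl⟩
  simp [minor, evalAt_X]

lemma Q2_le_ker_evalAt : Q2 ≤ RingHom.ker (evalAt !![1, 1, 0, 1; 1, 1, 0, 2]) := by
  rw [Q2_eq_span, Ideal.span_le]
  rintro _ (rfl | rfl | rfl) <;> simp [minor, evalAt_X]

lemma Q3_le_ker_evalAt : Q3 ≤ RingHom.ker (evalAt !![1, 0, 1, 1; 2, 0, 1, 1]) := by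
  rw [Q3_eq_span, Ideal.span_le]
  rintro _ (rfl | rfl | rfl) <;> simp [minor, evalAt_X]

lemma isAntichain_Q1_Q2_Q3 : IsAntichain (· ≤ ·) ({Q1, Q2, Q3} : Set (Ideal R)) := by
  have hX02 : X (matrixEntry (0, 2)) ∈ Q2 := Q2_eq_span ▸ Ideal.subset_span (by simp)
  have hX01 : X (matrixEntry (0, 1)) ∈ Q3 := Q3_eq_span ▸ Ideal.subset_span (by simp)
  have hD02 : D 0 1 0 2 ∈ Q1 := Q1_eq_span_minors ▸ Ideal.subset_span (by simp)
  have hD13 : D 0 1 1 3 ∈ Q1 := Q1_eq_minorIdeal ▸ Ideal.subset_span ⟨0, 1, 1, 3, by simp⟩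
  intro P hP P' hP' hne
  simp only [Set.mem_insert_iff, Set.mem_singleton_iff] at hP hP'
  rcases hP with rfl | rfl | rfl <;> rcases hP' with rfl | rfl | rfl
  all_goals try exact absurd rfl hne
  · exact not_le_of_evalAt Q2_le_ker_evalAt hD13 (by simp [minor, evalAt_X]; norm_num)
  · exact not_le_of_evalAt Q3_le_ker_evalAt hD02 (by simp [minor, evalAt_X]; norm_num)
  · exact not_le_of_evalAt Q1_le_ker_evalAt hX02 (by simp [evalAt_X])
  · exact not_le_of_evalAt Q3_le_ker_evalAt hX02 (by simp [evalAt_X])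
  · exact not_le_of_evalAt Q1_le_ker_evalAt hX01 (by simp [evalAt_X])
  · exact not_le_of_evalAt Q2_le_ker_evalAt hX01 (by simp [evalAt_X])

theorem I_minimalPrimes : I.minimalPrimes = {Q1, Q2, Q3} := by
  refine Ideal.minimalPrimes_eq_of_forall_exists_le ?_ isAntichain_Q1_Q2_Q3 ?_
  · rintro _ (rfl | rfl | rfl)
    exacts [⟨Q1_isPrime, I_le_Q1⟩, ⟨Q2_isPrime, I_le_Q2⟩, ⟨Q3_isPrime, I_le_Q3⟩]
  · intro P hP hI
    rcases exists_le_of_I_le P hI with h | h | h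
    exacts [⟨Q1, by simp, h⟩, ⟨Q2, by simp, h⟩, ⟨Q3, by simp, h⟩]

end
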